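/- arXiv:1207.0116 — 2 statements merged into one kernel-verified Lean document; each statement's English description precedes it below -/
import Mathlib

section
/- Let d ≥ 2 be an even integer and κ ≥ 1 an integer coprime to d (hence κ is odd), write d' = d/2, let i, j ≥ 0 be integers, and write κ(j−i) = ad + b with integers a and b satisfying 0 ≤ b < d. Then: if i − j > 0, then π_{κ/d}(q^{i+d'} + q^j) − π_{κ/d}(q^i − q^j) = κ; if 0 < j − i < d', then this difference equals κ − 2a − 1; and if j − i > d', then this difference equals 0. -/
open Polynomial

/-- `argCount t f` is the cardinality of the multiset `Arg_t(f)` of real numbers `λ` with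
`0 < λ ≤ 2πt` such that `e^{iλ}` is a (complex) root of the real polynomial `f`, each such `λ`
counted with the multiplicity of `e^{iλ}` as a root of `f`. -/
noncomputable def argCount (t : ℝ) (f : Polynomial ℝ) : ℕ :=
  ((f.map (algebraMap ℝ ℂ)).roots.map fun ξ =>
    Nat.card {l : ℝ // 0 < l ∧ l ≤ 2 * Real.pi * t ∧ Complex.exp ((l : ℂ) * Complex.I) = ξ}).sum

/-- `piFn κ d f` is the rational number
`π_{κ/d}(f) = (a(f) + A(f))·(κ/d) + |Arg_{κ/d}(f)| + (1/2)·(multiplicity of 1 as a root of f)`,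
where `a(f)` is the multiplicity of `0` as a root of `f` and `A(f)` is the degree of `f`. -/
noncomputable def piFn (κ d : ℕ) (f : Polynomial ℝ) : ℚ :=
  ((rootMultiplicity 0 f : ℚ) + (f.natDegree : ℚ)) * (κ : ℚ) / (d : ℚ)
    + (argCount ((κ : ℝ) / (d : ℝ)) f : ℚ) + (rootMultiplicity 1 f : ℚ) / 2

/-!
Both polynomials factor as `q^n (q^N ∓ 1)`. The roots of `q^N ∓ 1` are simple and lie
on the unit circle, so `|Arg_t|` counts the `λ ∈ (0, 2πt]` with `Nλ ∈ 2πℤ`, resp. `Nλ ∈ π + 2πℤ`,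
namely `⌊Nt⌋`, resp. `⌊Nt + 1/2⌋`. This gives
`π_t(q^n (q^N - 1)) = (2n + N)t + ⌊Nt⌋ + 1/2` and `π_t(q^n (q^N + 1)) = (2n + N)t + ⌊Nt + 1/2⌋`.
As `κ` is odd, `d' t = κ/2` is a half-integer, so adding `d'` to `N` shifts `⌊Nt + 1/2⌋` by an
integer and each case reduces to arithmetic. When `0 < j - i < d'`, coprimality makes
`(j - i)t = a + b/d` a non-integer, whence `⌊-(j - i)t⌋ = -a - 1`.
-/

open Complex

lemma setOf_exp_pow_eq_image {N : ℕ} (hN : 0 < N) (t θ : ℝ) :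
    {l : ℝ | 0 < l ∧ l ≤ 2 * Real.pi * t ∧ exp (l * I) ^ N = exp (2 * Real.pi * θ * I)} =
      (fun m : ℤ => 2 * Real.pi * (θ + m) / N) '' Set.Icc (⌊-θ⌋ + 1) ⌊N * t - θ⌋ := by
  have hN' : (0 : ℝ) < N := by exact_mod_cast hN
  have hπ := Real.pi_pos
  ext l
  simp only [Set.mem_ofPred_eq, Set.mem_image, Set.mem_Icc, Int.add_one_le_iff, Int.floor_lt,
    Int.le_floor, ← exp_nat_mul, exp_eq_exp_iff_exists_int]
  constructor
  · rintro ⟨hl0, hlt, m, hm⟩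
    have hl : l * N = 2 * Real.pi * (θ + m) := by
      apply_fun (·.im) at hm
      simp only [mul_im, natCast_re, ofReal_re, I_im, mul_one, ofReal_im, I_re, mul_zero,
        add_zero, natCast_im, mul_re, sub_self, add_im, re_ofNat, im_ofNat, sub_zero, zero_mul,
        intCast_re, intCast_im] at hm
      linarith
    refine ⟨m, ⟨?_, ?_⟩, by rw [← hl]; field_simp⟩
    · nlinarith
    · nlinarith
  · rintro ⟨m, ⟨hm0, hmt⟩, rfl⟩
    refine ⟨div_pos (by nlinarith) hN', ?_, m, ?_⟩
    · rw [div_le_iff₀ hN']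
      nlinarith
    · have : (N : ℂ) ≠ 0 := by exact_mod_cast hN.ne'
      push_cast
      field_simp

lemma ncard_setOf_exp_pow_eq {N : ℕ} (hN : 0 < N) (t θ : ℝ) :
    {l : ℝ | 0 < l ∧ l ≤ 2 * Real.pi * t ∧ exp (l * I) ^ N = exp (2 * Real.pi * θ * I)}.ncard =
      (⌊N * t - θ⌋ - ⌊-θ⌋).toNat := by
  have hN' : (N : ℝ) ≠ 0 := by exact_mod_cast hN.ne'
  rw [setOf_exp_pow_eq_image hN,
    Set.ncard_image_of_injective _ fun m m' h => by simpa [hN', Real.pi_ne_zero] using h,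
    ← Finset.coe_Icc, Set.ncard_coe_finset, Int.card_Icc]
  omega

lemma finite_setOf_exp_pow_eq {N : ℕ} (hN : 0 < N) (t θ : ℝ) :
    {l : ℝ | 0 < l ∧ l ≤ 2 * Real.pi * t ∧ exp (l * I) ^ N = exp (2 * Real.pi * θ * I)}.Finite := by
  rw [setOf_exp_pow_eq_image hN]
  exact (Set.finite_Icc _ _).image _

lemma argCount_eq_ncard {t : ℝ} {f : ℝ[X]} (hsep : (f.map (algebraMap ℝ ℂ)).Separable)
    (hfin : {l : ℝ | 0 < l ∧ l ≤ 2 * Real.pi * t ∧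
      (f.map (algebraMap ℝ ℂ)).IsRoot (exp (l * I))}.Finite) :
    argCount t f = {l : ℝ | 0 < l ∧ l ≤ 2 * Real.pi * t ∧
      (f.map (algebraMap ℝ ℂ)).IsRoot (exp (l * I))}.ncard := by
  classical
  set p := f.map (algebraMap ℝ ℂ)
  set S := hfin.toFinset
  have hroots : p.roots = p.roots.toFinset.val :=
    (nodup_roots hsep).dedup.symm.trans (Multiset.toFinset_val _).symm
  have hfiber : ∀ ξ ∈ p.roots.toFinset, Nat.card {l : ℝ // 0 < l ∧ l ≤ 2 * Real.pi * t ∧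
      exp (l * I) = ξ} = (S.filter fun l : ℝ => exp (l * I) = ξ).card := by
    intro ξ hξ
    rw [Multiset.mem_toFinset, mem_roots hsep.ne_zero] at hξ
    rw [← Set.ncard_coe_finset, ← Nat.card_coe_set_eq]
    congr 2
    ext l
    simp only [Set.mem_ofPred_eq, Finset.coe_filter, S, Set.Finite.mem_toFinset]
    constructor
    · rintro ⟨h0, ht, rfl⟩
      exact ⟨⟨h0, ht, hξ⟩, rfl⟩
    · rintro ⟨⟨h0, ht, -⟩, rfl⟩
      exact ⟨h0, ht, rfl⟩
  rw [argCount, hroots, ← Finset.sum_eq_multiset_sum, Finset.sum_congr rfl hfiber,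
    Set.ncard_eq_toFinset_card _ hfin, ← Finset.card_eq_sum_card_fiberwise]
  intro l hl
  exact Multiset.mem_toFinset.mpr ((mem_roots hsep.ne_zero).mpr (hfin.mem_toFinset.mp hl).2.2)

lemma argCount_X_pow_sub_C {N : ℕ} (hN : 0 < N) (t θ : ℝ) {c : ℝ}
    (hc : (c : ℂ) = exp (2 * Real.pi * θ * I)) :
    argCount t (X ^ N - C c) = (⌊N * t - θ⌋ - ⌊-θ⌋).toNat := by
  have hsep : ((X ^ N - C c).map (algebraMap ℝ ℂ)).Separable := by
    simpa using separable_X_pow_sub_C (c : ℂ) (Nat.cast_ne_zero.mpr hN.ne')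
      (hc ▸ exp_ne_zero _)
  have hroot : ∀ z : ℂ, ((X ^ N - C c).map (algebraMap ℝ ℂ)).IsRoot z ↔
      z ^ N = exp (2 * Real.pi * θ * I) := by
    simp [sub_eq_zero, hc]
  rw [argCount_eq_ncard hsep (by simp_rw [hroot]; exact finite_setOf_exp_pow_eq hN t θ)]
  simp_rw [hroot]
  exact ncard_setOf_exp_pow_eq hN t θ

lemma argCount_X_pow_mul (t : ℝ) (n : ℕ) (f : ℝ[X]) : argCount t (X ^ n * f) = argCount t f := by
  rcases eq_or_ne f 0 with rfl | hf
  · simp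
  rw [argCount, argCount, Polynomial.map_mul, roots_mul (by simp [hf])]
  simp [Multiset.map_nsmul, Multiset.sum_nsmul]

lemma argCount_X_pow_sub_one {N : ℕ} (hN : 0 < N) {t : ℝ} (ht : 0 ≤ t) :
    (argCount t (X ^ N - 1) : ℤ) = ⌊N * t⌋ := by
  have := argCount_X_pow_sub_C hN t 0 (c := 1) (by simp)
  rw [map_one] at this
  simp [this, Int.floor_nonneg.mpr (by positivity : (0 : ℝ) ≤ N * t)]

lemma argCount_X_pow_add_one {N : ℕ} (hN : 0 < N) {t : ℝ} (ht : 0 ≤ t) :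
    (argCount t (X ^ N + 1) : ℤ) = ⌊N * t + 1 / 2⌋ := by
  have := argCount_X_pow_sub_C hN t (-1 / 2) (c := -1) (by
    rw [show (2 * Real.pi * ((-1 / 2 : ℝ) : ℂ) * I) = -(Real.pi * I) by push_cast; ring, exp_neg,
      exp_pi_mul_I]
    norm_num)
  have h : ⌊-(-1 / 2 : ℝ)⌋ = 0 := by norm_num [Int.floor_eq_iff]
  rw [map_neg, map_one, sub_neg_eq_add, h, sub_zero, neg_div, sub_neg_eq_add] at this
  rw [this, Int.toNat_of_nonneg (Int.floor_nonneg.mpr (by positivity))]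

lemma piFn_X_pow_mul (κ d n : ℕ) {g : ℝ[X]} (hg : g.eval 0 ≠ 0) :
    piFn κ d (X ^ n * g) = (2 * n + g.natDegree) * κ / d + argCount ((κ : ℝ) / d) g
      + (rootMultiplicity 1 g : ℚ) / 2 := by
  have hg0 : g ≠ 0 := fun h => hg (by simp [h])
  have hne : X ^ n * g ≠ 0 := mul_ne_zero (pow_ne_zero n X_ne_zero) hg0
  have hX : rootMultiplicity 0 (X ^ n : ℝ[X]) = n := by
    simpa using rootMultiplicity_X_sub_C_pow (0 : ℝ) n
  rw [piFn, rootMultiplicity_mul hne, rootMultiplicity_mul hne, hX,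
    rootMultiplicity_eq_zero hg, rootMultiplicity_eq_zero (by simp : ¬ (X ^ n : ℝ[X]).IsRoot 1),
    natDegree_mul (pow_ne_zero n X_ne_zero) hg0, natDegree_X_pow, argCount_X_pow_mul]
  push_cast
  ring

lemma rootMultiplicity_one_X_pow_sub_one {N : ℕ} (hN : 0 < N) :
    rootMultiplicity 1 (X ^ N - 1 : ℝ[X]) = 1 := by
  have hsep : (X ^ N - 1 : ℝ[X]).Separable := by
    simpa using separable_X_pow_sub_C (1 : ℝ) (Nat.cast_ne_zero.mpr hN.ne') one_ne_zero
  refine le_antisymm (rootMultiplicity_le_one_of_separable hsep 1)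
    (rootMultiplicity_pos hsep.ne_zero |>.mpr (by simp))

lemma piFn_X_pow_mul_X_pow_sub_one (κ d n : ℕ) {N : ℕ} (hN : 0 < N) :
    piFn κ d (X ^ n * (X ^ N - 1)) = (2 * n + N) * κ / d + ⌊(N : ℚ) * κ / d⌋ + 1 / 2 := by
  have harg : (argCount ((κ : ℝ) / d) (X ^ N - 1) : ℚ) = ⌊(N : ℚ) * κ / d⌋ := by
    have h := argCount_X_pow_sub_one hN (t := (κ : ℝ) / d) (by positivity)
    rw [show (N : ℝ) * (κ / d) = ((N * κ / d : ℚ) : ℝ) by push_cast; ring, Rat.floor_cast] at h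
    exact_mod_cast h
  rw [piFn_X_pow_mul _ _ _ (by simp [hN.ne']), ← C_1, natDegree_X_pow_sub_C, C_1, harg,
    rootMultiplicity_one_X_pow_sub_one hN]
  push_cast
  ring

lemma piFn_X_pow_mul_X_pow_add_one (κ d n : ℕ) {N : ℕ} (hN : 0 < N) :
    piFn κ d (X ^ n * (X ^ N + 1)) = (2 * n + N) * κ / d + ⌊(N : ℚ) * κ / d + 1 / 2⌋ := by
  have harg : (argCount ((κ : ℝ) / d) (X ^ N + 1) : ℚ) = ⌊(N : ℚ) * κ / d + 1 / 2⌋ := by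
    have h := argCount_X_pow_add_one hN (t := (κ : ℝ) / d) (by positivity)
    rw [show (N : ℝ) * (κ / d) + 1 / 2 = ((N * κ / d + 1 / 2 : ℚ) : ℝ) by push_cast; ring,
      Rat.floor_cast] at h
    exact_mod_cast h
  rw [piFn_X_pow_mul _ _ _ (by simp [hN.ne']), ← C_1, natDegree_X_pow_add_C, C_1, harg,
    rootMultiplicity_eq_zero (by norm_num)]
  push_cast
  ring

lemma piFn_neg (κ d : ℕ) (f : ℝ[X]) : piFn κ d (-f) = piFn κ d f := by
  classical
  simp only [piFn, argCount, ← count_roots, roots_neg, Polynomial.map_neg, natDegree_neg]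

lemma piFn_cohook_sub_of_lt (c d' n N : ℕ) (hd' : 0 < d') (hN : 0 < N) :
    piFn (2 * c + 1) (2 * d') (X ^ n * (X ^ (N + d') + 1))
      - piFn (2 * c + 1) (2 * d') (X ^ n * (X ^ N - 1)) = ((2 * c + 1 : ℕ) : ℚ) := by
  have hd'q : (d' : ℚ) ≠ 0 := by positivity
  have hx : ((N + d' : ℕ) : ℚ) * (2 * c + 1 : ℕ) / (2 * d' : ℕ) + 1 / 2
      = (N : ℚ) * (2 * c + 1 : ℕ) / (2 * d' : ℕ) + (c + 1 : ℕ) := by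
    push_cast
    field_simp
    ring
  rw [piFn_X_pow_mul_X_pow_add_one _ _ _ (by omega), piFn_X_pow_mul_X_pow_sub_one _ _ _ hN, hx,
    Int.floor_add_natCast]
  push_cast
  field_simp
  ring

lemma piFn_cohook_sub_of_half_lt (c d' n M : ℕ) (hd' : 0 < d') (hM : 0 < M) :
    piFn (2 * c + 1) (2 * d') (X ^ (n + d') * (X ^ M + 1))
      - piFn (2 * c + 1) (2 * d') (X ^ n * (X ^ (d' + M) - 1)) = 0 := by
  have hd'q : (d' : ℚ) ≠ 0 := by positivity
  have hx : (M : ℚ) * (2 * c + 1 : ℕ) / (2 * d' : ℕ) + 1 / 2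
      = ((d' + M : ℕ) : ℚ) * (2 * c + 1 : ℕ) / (2 * d' : ℕ) - (c : ℕ) := by
    push_cast
    field_simp
    ring
  rw [piFn_X_pow_mul_X_pow_add_one _ _ _ hM, piFn_X_pow_mul_X_pow_sub_one _ _ _ (by omega), hx,
    Int.floor_sub_natCast]
  push_cast
  field_simp
  ring

lemma piFn_cohook_sub_of_lt_of_lt_half (c d' n N M : ℕ) (a b : ℤ) (hNM : N + M = d') (hN : 0 < N)
    (hM : 0 < M) (hab : (2 * c + 1 : ℤ) * N = a * (2 * d') + b) (hb0 : 0 < b)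
    (hbd : b < 2 * d') :
    piFn (2 * c + 1) (2 * d') (X ^ (n + N) * (X ^ M + 1))
      - piFn (2 * c + 1) (2 * d') (X ^ n * (X ^ N - 1)) = ((2 * c + 1 : ℕ) : ℚ) - 2 * a - 1 := by
  subst hNM
  have hd'q : ((N + M : ℕ) : ℚ) ≠ 0 := by positivity
  have hx : (N : ℚ) * (2 * c + 1 : ℕ) / (2 * (N + M) : ℕ) = a + b / (2 * (N + M) : ℕ) := by
    have : ((2 * c + 1 : ℤ) : ℚ) * N = a * (2 * (N + M) : ℤ) + b := by exact_mod_cast hab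
    push_cast at this ⊢
    field_simp
    linarith
  have hb : 0 < (b : ℚ) / (2 * (N + M) : ℕ) ∧ (b : ℚ) / (2 * (N + M) : ℕ) < 1 := by
    constructor
    · have : (0 : ℚ) < b := by exact_mod_cast hb0
      positivity
    · rw [div_lt_one (by positivity)]
      exact_mod_cast hbd
  have hfloor : ⌊(N : ℚ) * (2 * c + 1 : ℕ) / (2 * (N + M) : ℕ)⌋ = a := by
    rw [hx, Int.floor_eq_iff]
    constructor <;> linarith
  have hy : (M : ℚ) * (2 * c + 1 : ℕ) / (2 * (N + M) : ℕ) + 1 / 2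
      = (1 - b / (2 * (N + M) : ℕ) : ℚ) + ((c - a : ℤ) : ℚ) := by
    rw [eq_sub_of_add_eq' hx.symm]
    push_cast
    field_simp
    ring
  have hfloor' : ⌊(M : ℚ) * (2 * c + 1 : ℕ) / (2 * (N + M) : ℕ) + 1 / 2⌋ = c - a := by
    rw [hy, Int.floor_add_intCast, Int.floor_eq_zero_iff.mpr ⟨by linarith, by linarith⟩, zero_add]
  rw [piFn_X_pow_mul_X_pow_add_one _ _ _ hM, piFn_X_pow_mul_X_pow_sub_one _ _ _ hN, hfloor,
    hfloor']
  push_cast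
  field_simp
  ring

lemma rem_pos_of_coprime {κ d N : ℕ} {a b : ℤ} (hcop : Nat.Coprime κ d) (hN : 0 < N) (hNd : N < d)
    (hab : (κ : ℤ) * N = a * d + b) (hb0 : 0 ≤ b) : 0 < b := by
  refine hb0.lt_of_ne fun hb => ?_
  have hdvd : d ∣ N * κ := by
    rw [← Int.natCast_dvd_natCast]
    exact ⟨a, by push_cast; linarith⟩
  have := Nat.le_of_dvd hN (hcop.symm.dvd_of_dvd_mul_right hdvd)
  omega

theorem piFn_cohook_add_general (κ d : ℕ) (hcop : Nat.Coprime κ d) (d' : ℕ) (hd' : 2 * d' = d)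
    (i j : ℕ) (a b : ℤ)
    (hab : (κ : ℤ) * ((j : ℤ) - (i : ℤ)) = a * (d : ℤ) + b)
    (hb0 : 0 ≤ b) (hbd : b < (d : ℤ)) :
    (0 < (i : ℤ) - (j : ℤ) →
      piFn κ d (X ^ (i + d') + X ^ j) - piFn κ d (X ^ i - X ^ j) = (κ : ℚ)) ∧
    (0 < (j : ℤ) - (i : ℤ) → (j : ℤ) - (i : ℤ) < (d' : ℤ) →
      piFn κ d (X ^ (i + d') + X ^ j) - piFn κ d (X ^ i - X ^ j) =
        (κ : ℚ) - 2 * (a : ℚ) - 1) ∧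
    ((d' : ℤ) < (j : ℤ) - (i : ℤ) →
      piFn κ d (X ^ (i + d') + X ^ j) - piFn κ d (X ^ i - X ^ j) = 0) := by
  have hd'0 : 0 < d' := by omega
  obtain ⟨c, rfl⟩ : Odd κ := (Nat.Coprime.coprime_dvd_right ⟨d', hd'.symm⟩ hcop).odd_of_right
  subst hd'
  refine ⟨fun hij => ?_, fun hij hjd => ?_, fun hjd => ?_⟩
  · obtain ⟨N, rfl⟩ : ∃ N, i = j + N := ⟨i - j, by omega⟩
    rw [show (X ^ (j + N + d') + X ^ j : ℝ[X]) = X ^ j * (X ^ (N + d') + 1) by ring,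
      show (X ^ (j + N) - X ^ j : ℝ[X]) = X ^ j * (X ^ N - 1) by ring]
    exact piFn_cohook_sub_of_lt c d' j N hd'0 (by omega)
  · obtain ⟨N, rfl⟩ : ∃ N, j = i + N := ⟨j - i, by omega⟩
    obtain ⟨M, hNM⟩ : ∃ M, N + M = d' := ⟨d' - N, by omega⟩
    push_cast at hab hbd
    rw [add_sub_cancel_left] at hab
    rw [show (X ^ (i + d') + X ^ (i + N) : ℝ[X]) = X ^ (i + N) * (X ^ M + 1) by rw [← hNM]; ring,
      show (X ^ i - X ^ (i + N) : ℝ[X]) = -(X ^ i * (X ^ N - 1)) by ring, piFn_neg]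
    exact piFn_cohook_sub_of_lt_of_lt_half c d' i N M a b hNM (by omega) (by omega) hab
      (rem_pos_of_coprime (N := N) hcop (by omega) (by omega) (by push_cast; linarith) hb0) hbd
  · obtain ⟨M, rfl⟩ : ∃ M, j = i + d' + M := ⟨j - i - d', by omega⟩
    rw [show (X ^ (i + d') + X ^ (i + d' + M) : ℝ[X]) = X ^ (i + d') * (X ^ M + 1) by ring,
      show (X ^ i - X ^ (i + d' + M) : ℝ[X]) = -(X ^ i * (X ^ (d' + M) - 1)) by ring, piFn_neg]
    exact piFn_cohook_sub_of_half_lt c d' i M hd'0 (by omega)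

/-- Proposition 8.6, second equation: `d` even, `d' = d/2`, and `κ(j−i) = ad + b` with
`0 ≤ b < d`.  The difference `π_{κ/d}(q^{i+d'} + q^j) − π_{κ/d}(q^i − q^j)` equals `κ` if
`i − j > 0`, equals `κ − 2a − 1` if `0 < j − i < d'`, and equals `0` if `j − i > d'`. -/
theorem piFn_cohook_add (κ d : ℕ) (hd : 2 ≤ d) (heven : Even d) (hκ : 1 ≤ κ)
    (hcop : Nat.Coprime κ d) (d' : ℕ) (hd' : 2 * d' = d) (i j : ℕ) (a b : ℤ)
    (hab : (κ : ℤ) * ((j : ℤ) - (i : ℤ)) = a * (d : ℤ) + b)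
    (hb0 : 0 ≤ b) (hbd : b < (d : ℤ)) :
    (0 < (i : ℤ) - (j : ℤ) →
      piFn κ d (X ^ (i + d') + X ^ j) - piFn κ d (X ^ i - X ^ j) = (κ : ℚ)) ∧
    (0 < (j : ℤ) - (i : ℤ) → (j : ℤ) - (i : ℤ) < (d' : ℤ) →
      piFn κ d (X ^ (i + d') + X ^ j) - piFn κ d (X ^ i - X ^ j) =
        (κ : ℚ) - 2 * (a : ℚ) - 1) ∧
    ((d' : ℤ) < (j : ℤ) - (i : ℤ) →
      piFn κ d (X ^ (i + d') + X ^ j) - piFn κ d (X ^ i - X ^ j) = 0) :=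
  piFn_cohook_add_general κ d hcop d' hd' i j a b hab hb0 hbd
end

section
/- Let d ≥ 3 be an odd integer and κ ≥ 1 an integer coprime to d. Let a ≥ 1 and b ≥ 0 be integers, let x_1 > x_2 > … > x_a ≥ 0 and y_1 > y_2 > … > y_b ≥ 0 be integers with x_1 ≥ y_j for all j, and set n = (Σ_{i=1}^{a} x_i) + (Σ_{j=1}^{b} y_j) − ⌊(a+b−1)²/4⌋ (a nonnegative integer). Then π_{κ/d}( ∏_{i=n+1}^{n+d}(q^{2i} − 1) · ∏_{i=2}^{a}(q^{x_1+d} − q^{x_i}) · ∏_{i=1}^{b}(q^{x_1+d} + q^{y_i}) ) − π_{κ/d}( ∏_{i=x_1+1}^{x_1+d}(q^{2i} − 1) · ∏_{i=2}^{a}(q^{x_1} − q^{x_i}) · ∏_{i=1}^{b}(q^{x_1} + q^{y_i}) ) = 2κ(2n − 2x_1 + a + b − 1). -/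
open Polynomial

/-! `piFn` is additive on products of nonzero polynomials, and a power `X ^ v` contributes to both
sides alike, so everything reduces to the factors `X ^ m ∓ 1`. Their complex roots are the simple
`m`-th roots of `±1`, i.e. `e^{iλ}` with `mλ ∈ 2πℤ` (resp. `π + 2πℤ`), so
`|Arg_{κ/d}(X ^ m - 1)| = ⌊mκ/d⌋` and `|Arg_{κ/d}(X ^ m + 1)| = ⌊mκ/d + 1/2⌋`. Raising `m` by `d`
therefore raises `π_{κ/d}` by exactly `2κ`: each of the `a - 1 + b` factors of the last two
products gains `2κ`, and sliding the window `∏ (q^{2i} - 1)` by one step gains `4κ`. -/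

open Finset Real

variable {κ d : ℕ}

lemma argCount_mul (t : ℝ) {f g : ℝ[X]} (hf : f ≠ 0) (hg : g ≠ 0) :
    argCount t (f * g) = argCount t f + argCount t g := by
  rw [argCount, Polynomial.map_mul,
    roots_mul (mul_ne_zero (Polynomial.map_ne_zero hf) (Polynomial.map_ne_zero hg)),
    Multiset.map_add, Multiset.sum_add, argCount, argCount]

lemma argCount_C (t c : ℝ) : argCount t (C c) = 0 := by
  simp [argCount]

lemma piFn_mul {f g : ℝ[X]} (hf : f ≠ 0) (hg : g ≠ 0) :
    piFn κ d (f * g) = piFn κ d f + piFn κ d g := by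
  simp only [piFn, rootMultiplicity_mul (mul_ne_zero hf hg), natDegree_mul hf hg,
    argCount_mul _ hf hg]
  push_cast
  ring

lemma piFn_C (c : ℝ) : piFn κ d (C c) = 0 := by
  simp [piFn, argCount_C, rootMultiplicity_C]

lemma piFn_prod {ι : Type*} (s : Finset ι) {f : ι → ℝ[X]} (hf : ∀ i ∈ s, f i ≠ 0) :
    piFn κ d (∏ i ∈ s, f i) = ∑ i ∈ s, piFn κ d (f i) := by
  induction s using Finset.cons_induction with
  | empty => simpa using piFn_C (κ := κ) (d := d) 1
  | cons i s hi ih =>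
    rw [forall_mem_cons] at hf
    rw [prod_cons, sum_cons, piFn_mul hf.1 (prod_ne_zero_iff.mpr hf.2), ih hf.2]

lemma piFn_prod_sub_piFn_prod {ι : Type*} (s : Finset ι) {f g : ι → ℝ[X]} {c : ℚ}
    (hf : ∀ i ∈ s, f i ≠ 0) (hg : ∀ i ∈ s, g i ≠ 0)
    (hfg : ∀ i ∈ s, piFn κ d (f i) = piFn κ d (g i) + c) :
    piFn κ d (∏ i ∈ s, f i) - piFn κ d (∏ i ∈ s, g i) = #s * c := by
  rw [piFn_prod s hf, piFn_prod s hg, ← sum_sub_distrib,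
    sum_congr rfl fun i hi => by rw [hfg i hi, add_sub_cancel_left], sum_const, nsmul_eq_mul]

lemma argCount_eq_card {t : ℝ} {f : ℝ[X]} (hf : (f.map (algebraMap ℝ ℂ)).roots.Nodup)
    (T : Finset ℝ) (hT : ∀ l, l ∈ T ↔ 0 < l ∧ l ≤ 2 * π * t ∧
      Complex.exp (l * Complex.I) ∈ (f.map (algebraMap ℝ ℂ)).roots) :
    argCount t f = #T := by
  classical
  set R : Finset ℂ := ⟨_, hf⟩
  have hfiber : ∀ ξ ∈ R, Nat.card {l : ℝ // 0 < l ∧ l ≤ 2 * π * t ∧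
      Complex.exp (l * Complex.I) = ξ} =
        #{l ∈ T | Complex.exp (((l : ℝ) : ℂ) * Complex.I) = ξ} := by
    intro ξ hξ
    rw [← Nat.card_eq_finsetCard]
    refine Nat.card_congr (Equiv.subtypeEquivRight fun l => ?_)
    rw [mem_filter, hT]
    constructor
    · rintro ⟨h0, ht, rfl⟩
      exact ⟨⟨h0, ht, hξ⟩, rfl⟩
    · rintro ⟨⟨h0, ht, -⟩, rfl⟩
      exact ⟨h0, ht, rfl⟩
  rw [card_eq_sum_card_fiberwise (t := R) fun l hl => ((hT l).mp hl).2.2, ← sum_congr rfl hfiber]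
  rfl

lemma exp_mul_I_pow_eq_exp_iff {m : ℕ} (hm : m ≠ 0) (s l : ℝ) :
    Complex.exp (l * Complex.I) ^ m = Complex.exp (-(2 * π * s) * Complex.I) ↔
      ∃ k : ℤ, l = 2 * π * (k - s) / m := by
  rw [← Complex.exp_nat_mul, Complex.exp_eq_exp_iff_exists_int]
  refine exists_congr fun k => ⟨fun hk => ?_, fun hk => ?_⟩
  · have hreal : ((m * l : ℝ) : ℂ) = ((2 * π * (k - s) : ℝ) : ℂ) :=
      mul_right_cancel₀ Complex.I_ne_zero (by push_cast; linear_combination hk)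
    rw [eq_div_iff (by positivity), mul_comm]
    exact_mod_cast hreal
  · subst hk
    push_cast
    field_simp
    ring

lemma mem_image_Icc_iff_exp_pow_eq {m : ℕ} (hm : m ≠ 0) {s t : ℝ} (hs₀ : 0 ≤ s) (hs₁ : s < 1)
    (ht : 0 ≤ t) (l : ℝ) :
    l ∈ (Icc 1 ⌊m * t + s⌋₊).image (fun j : ℕ => 2 * π * (j - s) / m) ↔
      0 < l ∧ l ≤ 2 * π * t ∧
        Complex.exp (l * Complex.I) ^ m = Complex.exp (-(2 * π * s) * Complex.I) := by
  have hm' : (0 : ℝ) < m := by positivity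
  have hπ := pi_pos
  rw [exp_mul_I_pow_eq_exp_iff hm, mem_image]
  constructor
  · rintro ⟨j, hj, rfl⟩
    rw [mem_Icc, Nat.le_floor_iff (by positivity)] at hj
    have hj₁ : (1 : ℝ) ≤ j := by exact_mod_cast hj.1
    refine ⟨by apply div_pos <;> nlinarith, ?_, j, by push_cast; rfl⟩
    rw [div_le_iff₀ hm']
    nlinarith
  · rintro ⟨hl₀, hlt, k, rfl⟩
    have hks : s < k := by
      have := (div_pos_iff_of_pos_right hm').mp hl₀
      nlinarith
    have hk : 0 < k := by exact_mod_cast hs₀.trans_lt hks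
    lift k to ℕ using hk.le
    refine ⟨k, ?_, by push_cast; rfl⟩
    rw [div_le_iff₀ hm'] at hlt
    push_cast at hlt
    rw [mem_Icc, Nat.le_floor_iff (by positivity)]
    exact ⟨by exact_mod_cast hk, by nlinarith⟩

lemma argCount_X_pow_sub_C_s19 {m : ℕ} (hm : m ≠ 0) {s t c : ℝ} (hs₀ : 0 ≤ s) (hs₁ : s < 1)
    (ht : 0 ≤ t) (hc : (c : ℂ) = Complex.exp (-(2 * π * s) * Complex.I)) :
    argCount t (X ^ m - C c) = ⌊m * t + s⌋₊ := by
  have hmap : (X ^ m - C c).map (algebraMap ℝ ℂ) = X ^ m - C (c : ℂ) := by simp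
  have hc₀ : (c : ℂ) ≠ 0 := hc ▸ Complex.exp_ne_zero _
  have hmono : StrictMono fun j : ℕ => 2 * π * (j - s) / m := fun i j hij => by
    have := pi_pos
    have : (0 : ℝ) < m := by positivity
    dsimp only
    gcongr
  rw [argCount_eq_card (T := (Icc 1 ⌊m * t + s⌋₊).image _),
    card_image_of_injective _ hmono.injective, Nat.card_Icc, Nat.add_sub_cancel]
  · rw [hmap]
    exact nodup_roots (separable_X_pow_sub_C _ (by exact_mod_cast hm) hc₀)
  · intro l
    rw [mem_image_Icc_iff_exp_pow_eq hm hs₀ hs₁ ht, hmap,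
      mem_roots (X_pow_sub_C_ne_zero (Nat.pos_of_ne_zero hm) _), IsRoot.def, eval_sub, eval_pow,
      eval_X, eval_C, sub_eq_zero, hc]

lemma X_pow_sub_one_ne_zero {m : ℕ} (hm : m ≠ 0) : (X ^ m - 1 : ℝ[X]) ≠ 0 := by
  simpa using X_pow_sub_C_ne_zero (Nat.pos_of_ne_zero hm) (1 : ℝ)

lemma X_pow_add_X_pow_ne_zero (u v : ℕ) : (X ^ u + X ^ v : ℝ[X]) ≠ 0 := fun h => by
  simpa using congrArg (eval 1) h

lemma X_pow_sub_X_pow_ne_zero {u v : ℕ} (h : v < u) : (X ^ u - X ^ v : ℝ[X]) ≠ 0 :=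
  sub_ne_zero.mpr fun huv => h.ne' (by simpa using congrArg natDegree huv)

lemma floor_natCast_add_mul_div_add (hd : d ≠ 0) (m : ℕ) {s : ℝ} (hs : 0 ≤ s) :
    ⌊((m + d : ℕ) : ℝ) * ((κ : ℝ) / d) + s⌋₊ = ⌊(m : ℝ) * ((κ : ℝ) / d) + s⌋₊ + κ := by
  rw [← Nat.floor_add_natCast (by positivity)]
  congr 1
  push_cast
  field_simp
  ring

lemma piFn_X_pow_sub_one {m : ℕ} (hm : m ≠ 0) :
    piFn κ d (X ^ m - 1) = m * κ / d + ⌊m * ((κ : ℝ) / d)⌋₊ + 1 / 2 := by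
  have hsep : (X ^ m - C 1 : ℝ[X]).Separable :=
    separable_X_pow_sub_C _ (by exact_mod_cast hm) one_ne_zero
  have hroot₀ : rootMultiplicity 0 (X ^ m - C 1 : ℝ[X]) = 0 :=
    rootMultiplicity_eq_zero (by simp [hm])
  have hroot₁ : rootMultiplicity 1 (X ^ m - C 1 : ℝ[X]) = 1 :=
    le_antisymm (rootMultiplicity_le_one_of_separable hsep 1)
      ((rootMultiplicity_pos (X_pow_sub_C_ne_zero (Nat.pos_of_ne_zero hm) 1)).mpr (by simp))
  have harg := argCount_X_pow_sub_C_s19 hm le_rfl one_pos (by positivity : (0 : ℝ) ≤ κ / d)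
    (c := 1) (by simp)
  rw [← C_1, piFn, hroot₀, hroot₁, natDegree_X_pow_sub_C, harg, add_zero]
  push_cast
  ring

lemma piFn_X_pow_add_one (m : ℕ) :
    piFn κ d (X ^ m + 1) = m * κ / d + ⌊m * ((κ : ℝ) / d) + 1 / 2⌋₊ := by
  rcases eq_or_ne m 0 with rfl | hm
  · rw [pow_zero, ← C_1, ← C_add, piFn_C, Nat.floor_eq_zero.mpr (by norm_num)]
    simp
  have hroot₀ : rootMultiplicity 0 (X ^ m - C (-1) : ℝ[X]) = 0 :=
    rootMultiplicity_eq_zero (by simp [hm])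
  have hroot₁ : rootMultiplicity 1 (X ^ m - C (-1) : ℝ[X]) = 0 :=
    rootMultiplicity_eq_zero (by norm_num)
  have harg := argCount_X_pow_sub_C_s19 hm (s := 1 / 2) (by norm_num) (by norm_num)
    (by positivity : (0 : ℝ) ≤ κ / d) (c := -1) (by
      rw [show -(2 * π * (1 / 2 : ℝ) : ℂ) * Complex.I = -(π * Complex.I) by push_cast; ring,
        Complex.exp_neg_pi_mul_I]
      push_cast
      rfl)
  rw [← sub_neg_eq_add, ← C_1, ← C_neg, piFn, hroot₀, hroot₁, natDegree_X_pow_sub_C, harg]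
  push_cast
  ring

lemma piFn_X_pow_add_sub_one (hd : d ≠ 0) {m : ℕ} (hm : m ≠ 0) :
    piFn κ d (X ^ (m + d) - 1) = piFn κ d (X ^ m - 1) + 2 * κ := by
  have hfloor := floor_natCast_add_mul_div_add (κ := κ) hd m le_rfl
  rw [add_zero, add_zero] at hfloor
  rw [piFn_X_pow_sub_one (by omega), piFn_X_pow_sub_one hm, hfloor]
  push_cast
  field_simp
  ring

lemma piFn_X_pow_add_add_one (hd : d ≠ 0) (m : ℕ) :
    piFn κ d (X ^ (m + d) + 1) = piFn κ d (X ^ m + 1) + 2 * κ := by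
  rw [piFn_X_pow_add_one, piFn_X_pow_add_one,
    floor_natCast_add_mul_div_add hd m (by norm_num)]
  push_cast
  field_simp
  ring

lemma piFn_X_pow_add_sub_X_pow (hd : d ≠ 0) {u v : ℕ} (h : v < u) :
    piFn κ d (X ^ (u + d) - X ^ v) = piFn κ d (X ^ u - X ^ v) + 2 * κ := by
  obtain ⟨m, rfl⟩ := Nat.exists_eq_add_of_le h.le
  have hm : m ≠ 0 := by omega
  have hfactor : ∀ k, (X ^ (v + k) - X ^ v : ℝ[X]) = X ^ v * (X ^ k - 1) := fun k => by ring
  rw [add_assoc, hfactor, hfactor, piFn_mul (pow_ne_zero _ X_ne_zero) (X_pow_sub_one_ne_zero hm),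
    piFn_mul (pow_ne_zero _ X_ne_zero) (X_pow_sub_one_ne_zero (by omega)),
    piFn_X_pow_add_sub_one hd hm, add_assoc]

lemma piFn_X_pow_add_add_X_pow (hd : d ≠ 0) {u v : ℕ} (h : v ≤ u) :
    piFn κ d (X ^ (u + d) + X ^ v) = piFn κ d (X ^ u + X ^ v) + 2 * κ := by
  obtain ⟨m, rfl⟩ := Nat.exists_eq_add_of_le h
  have hfactor : ∀ k, (X ^ (v + k) + X ^ v : ℝ[X]) = X ^ v * (X ^ k + 1) := fun k => by ring
  have hne : ∀ k, (X ^ k + 1 : ℝ[X]) ≠ 0 := fun k => by simpa using X_pow_add_X_pow_ne_zero k 0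
  rw [add_assoc, hfactor, hfactor, piFn_mul (pow_ne_zero _ X_ne_zero) (hne _),
    piFn_mul (pow_ne_zero _ X_ne_zero) (hne _), piFn_X_pow_add_add_one hd, add_assoc]

lemma sum_Ioc_add_eq_sum_Ioc_add {g : ℕ → ℚ} {c : ℚ}
    (hg : ∀ i, 0 < i → g (i + d) = g i + c) (n : ℕ) :
    ∑ i ∈ Ioc n (n + d), g i = ∑ i ∈ Ioc 0 d, g i + n * c := by
  induction n with
  | zero => simp
  | succ n ih =>
    have hright := sum_Ioc_succ_top (Nat.le_add_right n d) g
    have hleft : ∑ i ∈ Ioc n (n + d + 1), g i =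
        g (n + 1) + ∑ i ∈ Ioc (n + 1) (n + d + 1), g i := by
      rw [← insert_Ioc_add_one_left_eq_Ioc (by omega), sum_insert (by simp)]
    have hstep := hg (n + 1) n.succ_pos
    rw [add_right_comm] at hstep ⊢
    push_cast
    linarith

lemma piFn_prod_Ioc_X_pow_two_mul_sub_one_sub (hd : d ≠ 0) (n m : ℕ) :
    piFn κ d (∏ i ∈ Ioc n (n + d), (X ^ (2 * i) - 1)) -
        piFn κ d (∏ i ∈ Ioc m (m + d), (X ^ (2 * i) - 1)) = 4 * κ * (n - m) := by
  have hne : ∀ k, ∀ i ∈ Ioc k (k + d), (X ^ (2 * i) - 1 : ℝ[X]) ≠ 0 := fun k i hi =>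
    X_pow_sub_one_ne_zero (by rw [mem_Ioc] at hi; omega)
  have hshift : ∀ i, 0 < i →
      piFn κ d (X ^ (2 * (i + d)) - 1) = piFn κ d (X ^ (2 * i) - 1) + 4 * κ := by
    intro i hi
    rw [show 2 * (i + d) = 2 * i + d + d by ring, piFn_X_pow_add_sub_one hd (by omega),
      piFn_X_pow_add_sub_one hd (by omega)]
    ring
  rw [piFn_prod _ (hne n), piFn_prod _ (hne m), sum_Ioc_add_eq_sum_Ioc_add hshift,
    sum_Ioc_add_eq_sum_Ioc_add hshift]
  ring

lemma apply_lt_apply_one_of_succ_lt {α : Type*} [Preorder α] {a : ℕ} {x : ℕ → α}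
    (hx : ∀ i, 1 ≤ i → i < a → x (i + 1) < x i) {i : ℕ} (hi : i ∈ Icc 2 a) : x i < x 1 := by
  obtain ⟨h2, hia⟩ := mem_Icc.mp hi
  clear hi
  induction i, h2 using Nat.le_induction with
  | base => exact hx 1 le_rfl hia
  | succ i h2 ih => exact (hx i (by omega) hia).trans (ih (by omega))

theorem piFn_Sp_min_general (κ d : ℕ) (hd : 3 ≤ d)
    (a b : ℕ) (ha : 1 ≤ a) (x y : ℕ → ℕ)
    (hx : ∀ i, 1 ≤ i → i < a → x (i + 1) < x i)
    (hxy : ∀ j, 1 ≤ j → j ≤ b → y j ≤ x 1)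
    (n : ℕ) :
    piFn κ d ((∏ i ∈ Finset.Ioc n (n + d), (X ^ (2 * i) - 1)) *
          (∏ i ∈ Finset.Icc 2 a, (X ^ (x 1 + d) - X ^ x i)) *
          ∏ i ∈ Finset.Icc 1 b, (X ^ (x 1 + d) + X ^ y i)) -
        piFn κ d ((∏ i ∈ Finset.Ioc (x 1) (x 1 + d), (X ^ (2 * i) - 1)) *
          (∏ i ∈ Finset.Icc 2 a, (X ^ (x 1) - X ^ x i)) *
          ∏ i ∈ Finset.Icc 1 b, (X ^ (x 1) + X ^ y i)) =
      2 * (κ : ℚ) * (2 * (n : ℚ) - 2 * (x 1 : ℚ) + (a : ℚ) + (b : ℚ) - 1) := by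
  have hd₀ : d ≠ 0 := by omega
  have hx₁ : ∀ i ∈ Icc 2 a, x i < x 1 := fun i hi => apply_lt_apply_one_of_succ_lt hx hi
  have hA : ∀ k, ∏ i ∈ Ioc k (k + d), (X ^ (2 * i) - 1 : ℝ[X]) ≠ 0 := fun k =>
    prod_ne_zero_iff.mpr fun i hi => X_pow_sub_one_ne_zero (by rw [mem_Ioc] at hi; omega)
  have hB : ∀ u, x 1 ≤ u → ∀ i ∈ Icc 2 a, (X ^ u - X ^ x i : ℝ[X]) ≠ 0 := fun u hu i hi =>
    X_pow_sub_X_pow_ne_zero ((hx₁ i hi).trans_le hu)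
  have hC : ∀ u, ∀ i ∈ Icc 1 b, (X ^ u + X ^ y i : ℝ[X]) ≠ 0 := fun u i _ =>
    X_pow_add_X_pow_ne_zero u (y i)
  have hBprod : ∀ u, x 1 ≤ u → ∏ i ∈ Icc 2 a, (X ^ u - X ^ x i : ℝ[X]) ≠ 0 := fun u hu =>
    prod_ne_zero_iff.mpr (hB u hu)
  have hCprod : ∀ u, ∏ i ∈ Icc 1 b, (X ^ u + X ^ y i : ℝ[X]) ≠ 0 := fun u =>
    prod_ne_zero_iff.mpr (hC u)
  have hBdiff := piFn_prod_sub_piFn_prod (κ := κ) (d := d) _ (hB _ (by omega)) (hB _ le_rfl)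
    fun i hi => piFn_X_pow_add_sub_X_pow hd₀ (hx₁ i hi)
  have hCdiff := piFn_prod_sub_piFn_prod (κ := κ) (d := d) _ (hC _) (hC _)
    fun i hi => piFn_X_pow_add_add_X_pow hd₀ (hxy i (mem_Icc.mp hi).1 (mem_Icc.mp hi).2)
  simp only [Nat.card_Icc, Nat.add_sub_cancel] at hBdiff hCdiff
  rw [show a + 1 - 2 = a - 1 by omega, Nat.cast_sub ha, Nat.cast_one] at hBdiff
  rw [piFn_mul (mul_ne_zero (hA _) (hBprod _ (by omega))) (hCprod _),
    piFn_mul (hA _) (hBprod _ (by omega)),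
    piFn_mul (mul_ne_zero (hA _) (hBprod _ le_rfl)) (hCprod _), piFn_mul (hA _) (hBprod _ le_rfl)]
  linear_combination
    piFn_prod_Ioc_X_pow_two_mul_sub_one_sub (κ := κ) hd₀ n (x 1) + hBdiff + hCdiff

/-- Section 9 (symplectic and odd-dimensional orthogonal groups, `d` odd): for a symbol
`{X,Y}` with `x 1 > … > x a ≥ 0`, `y 1 > … > y b ≥ 0`, `x 1 ≥ y j` for all `j`, of rank
`n = Σ x_i + Σ y_j − ⌊(a+b−1)²/4⌋`,
`π_{κ/d}(∏_{i=n+1}^{n+d}(q^{2i}−1)·∏_{i=2}^{a}(q^{x_1+d}−q^{x_i})·∏_{i=1}^{b}(q^{x_1+d}+q^{y_i}))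
 − π_{κ/d}(∏_{i=x_1+1}^{x_1+d}(q^{2i}−1)·∏_{i=2}^{a}(q^{x_1}−q^{x_i})·∏_{i=1}^{b}(q^{x_1}+q^{y_i}))
 = 2κ(2n − 2x_1 + a + b − 1)`. -/
theorem piFn_Sp_min (κ d : ℕ) (hd : 3 ≤ d) (hodd : Odd d) (hκ : 1 ≤ κ)
    (hcop : Nat.Coprime κ d)
    (a b : ℕ) (ha : 1 ≤ a) (x y : ℕ → ℕ)
    (hx : ∀ i, 1 ≤ i → i < a → x (i + 1) < x i)
    (hy : ∀ j, 1 ≤ j → j < b → y (j + 1) < y j)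
    (hxy : ∀ j, 1 ≤ j → j ≤ b → y j ≤ x 1)
    (n : ℕ)
    (hn : (n : ℤ) = (∑ i ∈ Finset.Icc 1 a, (x i : ℤ)) + (∑ j ∈ Finset.Icc 1 b, (y j : ℤ))
      - (((a + b - 1) ^ 2 / 4 : ℕ) : ℤ)) :
    piFn κ d ((∏ i ∈ Finset.Ioc n (n + d), (X ^ (2 * i) - 1)) *
          (∏ i ∈ Finset.Icc 2 a, (X ^ (x 1 + d) - X ^ x i)) *
          ∏ i ∈ Finset.Icc 1 b, (X ^ (x 1 + d) + X ^ y i)) -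
        piFn κ d ((∏ i ∈ Finset.Ioc (x 1) (x 1 + d), (X ^ (2 * i) - 1)) *
          (∏ i ∈ Finset.Icc 2 a, (X ^ (x 1) - X ^ x i)) *
          ∏ i ∈ Finset.Icc 1 b, (X ^ (x 1) + X ^ y i)) =
      2 * (κ : ℚ) * (2 * (n : ℚ) - 2 * (x 1 : ℚ) + (a : ℚ) + (b : ℚ) - 1) :=
  piFn_Sp_min_general κ d hd a b ha x y hx hxy n
end
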